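/- Let a ∈ (0,∞), let P be a finite subset of (0,a), and let S : ℝ → ℝ satisfy: (S1) S(−x) = −S(x) and S(a+x) = −S(x) for all x ∈ [0,∞); (S2) 0 < S(x) < x for all x ∈ (0,a); (S3) S is continuous on [0,a], continuously differentiable on [0,a), and twice continuously differentiable on [0,a) \ P; (S4) S'(x)² − S''(x)·S(x) ≥ 1 for all x ∈ [0,a) \ P. Then for all real x ≠ 0, (a² − x²)/(a² + x²) ≤ S(x)/x. -/

import Mathlib

open Real Set Filter Topology

/-!
Put `G x = (a² + x²) S x - x (a² - x²)`; for `x > 0` the claim is `G x ≥ 0`. On `[0, a]`, `G`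
vanishes at both ends, so a negative value would give an interior minimum `c`. There `G c < 0`
and `G' c = 0`, and feeding these into the bound `S'' ≤ (S'² - 1) / S` from (S4) shows that
`G'' < 0` just to the right of `c` (away from `P`); hence `G` decreases there, which is
impossible at a minimum. For `x ≥ a`, anti-periodicity gives `|S x| ≤ x` on `[0, ∞)` and then
`S x ≥ a - x`, which is enough; oddness handles `x < 0`.
-/

theorem nonneg_of_forall_not_isLocalMin {f : ℝ → ℝ} {a b : ℝ} (hab : a ≤ b)
    (hf : ContinuousOn f (Icc a b)) (ha : 0 ≤ f a) (hb : 0 ≤ f b)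
    (h : ∀ c ∈ Ioo a b, f c < 0 → ¬IsLocalMin f c) : ∀ x ∈ Icc a b, 0 ≤ f x := by
  obtain ⟨c, hc, hmin⟩ := isCompact_Icc.exists_isMinOn (nonempty_Icc.2 hab) hf
  intro x hx
  by_contra! hx0
  have hfc : f c < 0 := (isMinOn_iff.1 hmin x hx).trans_lt hx0
  have hac : a < c := hc.1.lt_of_ne (by rintro rfl; linarith)
  have hcb : c < b := hc.2.lt_of_ne (by rintro rfl; linarith)
  exact h c ⟨hac, hcb⟩ hfc (hmin.isLocalMin (Icc_mem_nhds hac hcb))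

theorem eventually_nhdsGT_lt_of_hasDerivAt {f f' f'' : ℝ → ℝ} {c : ℝ}
    (hf : ∀ᶠ y in 𝓝 c, HasDerivAt f (f' y) y) (hf'c : ContinuousAt f' c) (hc : f' c = 0)
    (hf' : ∀ᶠ y in 𝓝[>] c, HasDerivAt f' (f'' y) y ∧ f'' y < 0) :
    ∀ᶠ y in 𝓝[>] c, f y < f c := by
  obtain ⟨d, hcd, hsub⟩ := mem_nhdsGT_iff_exists_Ioo_subset.1 (hf'.and (nhdsWithin_le_nhds hf))
  filter_upwards [Ioo_mem_nhdsGT hcd] with y hy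
  have hIcc : ∀ z ∈ Icc c y, z = c ∨ z ∈ Ioo c d := fun z hz =>
    hz.1.eq_or_lt.imp Eq.symm fun hcz => ⟨hcz, hz.2.trans_lt hy.2⟩
  have hIoo : ∀ z ∈ interior (Icc c y), z ∈ Ioo c d := fun z hz => by
    rw [interior_Icc] at hz; exact ⟨hz.1, hz.2.trans hy.2⟩
  have hf'_neg : ∀ z ∈ Ioc c y, f' z < 0 := by
    have hf'_anti : StrictAntiOn f' (Icc c y) := by
      refine strictAntiOn_of_hasDerivWithinAt_neg (f' := f'') (convex_Icc c y) ?_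
        (fun z hz => (hsub (hIoo z hz)).1.1.hasDerivWithinAt) (fun z hz => (hsub (hIoo z hz)).1.2)
      intro z hz
      rcases hIcc z hz with rfl | hz'
      · exact hf'c.continuousWithinAt
      · exact (hsub hz').1.1.continuousAt.continuousWithinAt
    intro z hz
    exact hc ▸ hf'_anti (left_mem_Icc.2 hy.1.le) (Ioc_subset_Icc_self hz) hz.1
  have hf_anti : StrictAntiOn f (Icc c y) := by
    refine strictAntiOn_of_hasDerivWithinAt_neg (f' := f') (convex_Icc c y) ?_
      (fun z hz => (hsub (hIoo z hz)).2.hasDerivWithinAt) ?_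
    · intro z hz
      rcases hIcc z hz with rfl | hz'
      · exact hf.self_of_nhds.continuousAt.continuousWithinAt
      · exact (hsub hz').2.continuousAt.continuousWithinAt
    · intro z hz
      rw [interior_Icc] at hz
      exact hf'_neg z (Ioo_subset_Ioc_self hz)
  exact hf_anti (left_mem_Icc.2 hy.1.le) (right_mem_Icc.2 hy.1.le) hy.1

def redhefferGap (a : ℝ) (S : ℝ → ℝ) (x : ℝ) : ℝ :=
  (a ^ 2 + x ^ 2) * S x - x * (a ^ 2 - x ^ 2)

def redhefferGapDeriv (a : ℝ) (S S' : ℝ → ℝ) (x : ℝ) : ℝ :=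
  2 * x * S x + (a ^ 2 + x ^ 2) * S' x - (a ^ 2 - 3 * x ^ 2)

section

variable {a x : ℝ} {S S' : ℝ → ℝ}

theorem continuousOn_redhefferGap {s : Set ℝ} (hS : ContinuousOn S s) :
    ContinuousOn (redhefferGap a S) s := by
  unfold redhefferGap; fun_prop

theorem hasDerivAt_redhefferGap (hS : HasDerivAt S (S' x) x) :
    HasDerivAt (redhefferGap a S) (redhefferGapDeriv a S S' x) x := by
  refine ((((hasDerivAt_pow 2 x).const_add (a ^ 2)).mul hS).sub
    ((hasDerivAt_id' x).mul ((hasDerivAt_pow 2 x).const_sub (a ^ 2)))).congr_deriv ?_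
  unfold redhefferGapDeriv
  ring

theorem hasDerivAt_redhefferGapDeriv {s'' : ℝ} (hS : HasDerivAt S (S' x) x)
    (hS' : HasDerivAt S' s'' x) :
    HasDerivAt (redhefferGapDeriv a S S')
      (2 * S x + 4 * x * S' x + (a ^ 2 + x ^ 2) * s'' + 6 * x) x := by
  refine (((((hasDerivAt_id' x).const_mul 2).mul hS).add
    (((hasDerivAt_pow 2 x).const_add (a ^ 2)).mul hS')).sub
    (((hasDerivAt_pow 2 x).const_mul 3).const_sub (a ^ 2))).congr_deriv ?_
  ring

theorem redhefferGap_nonneg_iff (hx : 0 < x) :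
    0 ≤ redhefferGap a S x ↔ (a ^ 2 - x ^ 2) / (a ^ 2 + x ^ 2) ≤ S x / x := by
  rw [div_le_div_iff₀ (by positivity) hx, redhefferGap, sub_nonneg, mul_comm x, mul_comm (S x)]

theorem redhefferGap_nonneg_of_sub_le (ha : 0 ≤ a) (h : a - x ≤ S x) :
    0 ≤ redhefferGap a S x := by
  have : (a ^ 2 + x ^ 2) * (a - x) ≤ (a ^ 2 + x ^ 2) * S x := by gcongr
  unfold redhefferGap
  nlinarith [mul_nonneg ha (sq_nonneg (a - x))]

/-- Here `s = S c`, `d = S' c` at a critical point `c` where `redhefferGap a S` is negative, and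
the conclusion is that the upper bound for its second derivative coming from (S4) is negative. -/
theorem redheffer_second_deriv_bound_neg {c s d : ℝ} (hc : 0 < c) (hs : 0 < s)
    (hgap : (a ^ 2 + c ^ 2) * s - c * (a ^ 2 - c ^ 2) < 0)
    (hcrit : 2 * c * s + (a ^ 2 + c ^ 2) * d - (a ^ 2 - 3 * c ^ 2) = 0) :
    2 * s + 4 * c * d + 6 * c + (a ^ 2 + c ^ 2) * (d ^ 2 - 1) / s < 0 := by
  have hac : 0 < a ^ 2 - c ^ 2 := by nlinarith
  have hsc : s < c := by nlinarith
  have key : 2 * s ^ 2 * (a ^ 2 - c ^ 2) + 6 * c * s * (a ^ 2 + c ^ 2)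
      - 8 * c ^ 2 * (a ^ 2 - c ^ 2) < 0 := by
    nlinarith [mul_nonneg hac.le (by nlinarith : (0:ℝ) ≤ c ^ 2 - s ^ 2)]
  have expand : ((2 * s + 4 * c * d + 6 * c) * s + (a ^ 2 + c ^ 2) * (d ^ 2 - 1)) * (a ^ 2 + c ^ 2)
      = 2 * s ^ 2 * (a ^ 2 - c ^ 2) + 6 * c * s * (a ^ 2 + c ^ 2)
        - 8 * c ^ 2 * (a ^ 2 - c ^ 2) := by
    linear_combination ((a ^ 2 + c ^ 2) * d + (a ^ 2 - 3 * c ^ 2) + 2 * c * s) * hcrit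
  have hnum : (2 * s + 4 * c * d + 6 * c) * s + (a ^ 2 + c ^ 2) * (d ^ 2 - 1) < 0 :=
    neg_of_mul_neg_left (expand ▸ key) (by positivity)
  calc 2 * s + 4 * c * d + 6 * c + (a ^ 2 + c ^ 2) * (d ^ 2 - 1) / s
      = ((2 * s + 4 * c * d + 6 * c) * s + (a ^ 2 + c ^ 2) * (d ^ 2 - 1)) / s := by
        field_simp
    _ < 0 := div_neg_of_neg_of_pos hnum hs

theorem not_isLocalMin_redhefferGap {P : Set ℝ} (hPfin : P.Finite)
    (hpos : ∀ x ∈ Ioo 0 a, 0 < S x)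
    (hC1 : ContDiffOn ℝ 1 S (Ioo 0 a)) (hC2 : ContDiffOn ℝ 2 S (Ioo 0 a \ P))
    (hS4 : ∀ x ∈ Ioo 0 a \ P, 1 ≤ deriv S x ^ 2 - deriv (deriv S) x * S x)
    {c : ℝ} (hc : c ∈ Ioo 0 a) (hGc : redhefferGap a S c < 0) :
    ¬IsLocalMin (redhefferGap a S) c := by
  intro hmin
  have hI : Ioo 0 a ∈ 𝓝 c := Ioo_mem_nhds hc.1 hc.2
  have hS' : ∀ y ∈ Ioo 0 a, HasDerivAt S (deriv S y) y := fun y hy =>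
    ((hC1.contDiffAt (Ioo_mem_nhds hy.1 hy.2)).differentiableAt one_ne_zero).hasDerivAt
  have hSc : ContinuousAt S c := (hS' c hc).continuousAt
  have hS'c : ContinuousAt (deriv S) c :=
    (hC1.continuousOn_deriv_of_isOpen isOpen_Ioo le_rfl).continuousAt hI
  have hG' : ∀ᶠ y in 𝓝 c,
      HasDerivAt (redhefferGap a S) (redhefferGapDeriv a S (deriv S) y) y :=
    eventually_of_mem hI fun y hy => hasDerivAt_redhefferGap (hS' y hy)
  have hcrit : redhefferGapDeriv a S (deriv S) c = 0 := hmin.hasDerivAt_eq_zero hG'.self_of_nhds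
  -- By (S4), `Φ` bounds `G''` from above off `P`; unlike `G''`, it is continuous at `c`.
  set Φ : ℝ → ℝ := fun y =>
    2 * S y + 4 * y * deriv S y + 6 * y + (a ^ 2 + y ^ 2) * (deriv S y ^ 2 - 1) / S y
  have hΦ : ∀ᶠ y in 𝓝 c, Φ y < 0 := by
    have hΦc : ContinuousAt Φ c :=
      (by fun_prop : ContinuousAt (fun y => 2 * S y + 4 * y * deriv S y + 6 * y) c).add
        ((by fun_prop : ContinuousAt (fun y => (a ^ 2 + y ^ 2) * (deriv S y ^ 2 - 1)) c).div
          hSc (hpos c hc).ne')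
    exact hΦc.eventually_lt continuousAt_const
      (redheffer_second_deriv_bound_neg hc.1 (hpos c hc) hGc hcrit)
  have hP : ∀ᶠ y in 𝓝[>] c, y ∉ P := by
    have := hPfin.to_subtype
    filter_upwards [nhdsGT_le_nhdsNE c (nhdsNE_of_nhdsNE_sdiff_finite univ_mem this)] with y hy
    exact hy.2
  have hG'' : ∀ᶠ y in 𝓝[>] c, HasDerivAt (redhefferGapDeriv a S (deriv S))
      (2 * S y + 4 * y * deriv S y + (a ^ 2 + y ^ 2) * deriv (deriv S) y + 6 * y) y ∧
      2 * S y + 4 * y * deriv S y + (a ^ 2 + y ^ 2) * deriv (deriv S) y + 6 * y < 0 := by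
    filter_upwards [nhdsWithin_le_nhds hI, nhdsWithin_le_nhds hΦ, hP] with y hy hΦy hyP
    have hU : IsOpen (Ioo 0 a \ P) := isOpen_Ioo.sdiff hPfin.isClosed
    have hS'' : HasDerivAt (deriv S) (deriv (deriv S) y) y :=
      (((hC2.deriv_of_isOpen hU (by norm_num)).contDiffAt
        (hU.mem_nhds ⟨hy, hyP⟩)).differentiableAt one_ne_zero).hasDerivAt
    refine ⟨hasDerivAt_redhefferGapDeriv (hS' y hy) hS'', hΦy.trans_le' ?_⟩
    have hbound : deriv (deriv S) y ≤ (deriv S y ^ 2 - 1) / S y := by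
      rw [le_div_iff₀ (hpos y hy)]
      linarith [hS4 y ⟨hy, hyP⟩]
    have := mul_le_mul_of_nonneg_left hbound (by positivity : 0 ≤ a ^ 2 + y ^ 2)
    simp only [Φ, mul_div_assoc]
    linarith
  have hG'c : ContinuousAt (redhefferGapDeriv a S (deriv S)) c := by
    unfold redhefferGapDeriv; fun_prop
  obtain ⟨y, hlt, hle⟩ := ((eventually_nhdsGT_lt_of_hasDerivAt hG' hG'c hcrit hG'').and
    (hmin.filter_mono nhdsWithin_le_nhds)).exists
  exact hlt.not_ge hle

theorem abs_le_self_of_antiperiodic (ha : 0 < a) (hanti : ∀ x, 0 ≤ x → S (a + x) = -S x)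
    (hbound : ∀ x ∈ Ico 0 a, |S x| ≤ x) (hx : 0 ≤ x) : |S x| ≤ x := by
  obtain ⟨n, hn⟩ := exists_nat_ge (x / a)
  induction n generalizing x with
  | zero =>
    have : x ≤ 0 := by simpa using (div_le_iff₀ ha).1 hn
    exact hbound x ⟨hx, by linarith⟩
  | succ n ih =>
    rcases lt_or_ge x a with hxa | hxa
    · exact hbound x ⟨hx, hxa⟩
    · have h := hanti (x - a) (sub_nonneg.2 hxa)
      rw [add_sub_cancel] at h
      rw [h, abs_neg]
      have := ih (sub_nonneg.2 hxa) (by rw [sub_div, div_self ha.ne']; push_cast at hn; linarith)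
      linarith

theorem sub_le_of_antiperiodic (ha : 0 < a) (hanti : ∀ x, 0 ≤ x → S (a + x) = -S x)
    (hbound : ∀ x ∈ Ico 0 a, |S x| ≤ x) (hx : a ≤ x) : a - x ≤ S x := by
  have h := hanti (x - a) (sub_nonneg.2 hx)
  rw [add_sub_cancel] at h
  linarith [le_abs_self (S (x - a)), abs_le_self_of_antiperiodic ha hanti hbound (sub_nonneg.2 hx)]

end

theorem generalized_redheffer (a : ℝ) (ha : 0 < a) (P : Set ℝ) (hPfin : P.Finite)
    (S : ℝ → ℝ)
    (hS1 : ∀ x ∈ Ici (0:ℝ), S (-x) = -S x ∧ S (a + x) = -S x)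
    (hS2 : ∀ x ∈ Ioo 0 a, 0 < S x ∧ S x < x)
    (hS3 : ContinuousOn S (Icc 0 a) ∧ ContDiffOn ℝ 1 S (Ico 0 a) ∧
      ContDiffOn ℝ 2 S (Ico 0 a \ P))
    (hS4 : ∀ x ∈ Ico 0 a \ P, (deriv S x) ^ 2 - deriv (deriv S) x * S x ≥ 1) :
    ∀ x : ℝ, x ≠ 0 → (a ^ 2 - x ^ 2) / (a ^ 2 + x ^ 2) ≤ S x / x := by
  obtain ⟨hcont, hC1, hC2⟩ := hS3
  have hS0 : S 0 = 0 := by linarith [neg_zero (G := ℝ) ▸ (hS1 0 self_mem_Ici).1]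
  have hSa : S a = 0 := by simpa [hS0] using (hS1 0 self_mem_Ici).2
  have hgap : ∀ x ∈ Icc 0 a, 0 ≤ redhefferGap a S x :=
    nonneg_of_forall_not_isLocalMin ha.le (continuousOn_redhefferGap hcont)
      (by simp [redhefferGap, hS0]) (by simp [redhefferGap, hSa])
      fun c hc => not_isLocalMin_redhefferGap hPfin (fun x hx => (hS2 x hx).1)
        (hC1.mono Ioo_subset_Ico_self) (hC2.mono (sdiff_subset_sdiff_left Ioo_subset_Ico_self))
        (fun x hx => hS4 x ⟨Ioo_subset_Ico_self hx.1, hx.2⟩) hc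
  have hbound : ∀ x ∈ Ico 0 a, |S x| ≤ x := by
    rintro x ⟨hx0, hxa⟩
    rcases hx0.eq_or_lt with rfl | hx0
    · simp [hS0]
    · obtain ⟨h1, h2⟩ := hS2 x ⟨hx0, hxa⟩
      exact (abs_of_pos h1).trans_le h2.le
  have hpos : ∀ x, 0 < x → (a ^ 2 - x ^ 2) / (a ^ 2 + x ^ 2) ≤ S x / x := by
    intro x hx
    rw [← redhefferGap_nonneg_iff hx]
    rcases lt_or_ge x a with hxa | hxa
    · exact hgap x ⟨hx.le, hxa.le⟩
    · exact redhefferGap_nonneg_of_sub_le ha.le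
        (sub_le_of_antiperiodic ha (fun x hx => (hS1 x hx).2) hbound hxa)
  intro x hx
  rcases hx.lt_or_gt with hx | hx
  · have hodd : S (-x) = -S x := by linarith [neg_neg x ▸ (hS1 (-x) (neg_nonneg.2 hx.le)).1]
    simpa [neg_sq, hodd, neg_div_neg_eq] using hpos (-x) (neg_pos.2 hx)
  · exact hpos x hx
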